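/- The adjunction I : C⁰ ⇄ Top : α, where I is the full inclusion of the category of Δ-generated (equivalently, arc-generated) topological spaces into the category of all topological spaces and α is its right adjoint (the coreflection replacing the topology of a space by the final topology for all continuous maps from standard simplices, equivalently all continuous curves from ℝ), is a Quillen equivalence between the model structure on C⁰ (weak equivalences the weak homotopy equivalences, fibrations the Serre fibrations) and the Quillen model structure on Top (weak equivalences the weak homotopy equivalences, fibrations the Serre fibrations). -/

import Mathlib

/-!
Statement 6: The adjunction consisting of the full inclusion `I` of the category of Δ-generated
(equivalently, arc-generated) topological spaces into the category of all topological spaces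
and its right adjoint (the coreflector, which replaces the topology of a space by the final
topology for all continuous maps from euclidean spaces, equivalently from the standard
simplices, equivalently from `ℝ`) is a Quillen equivalence between the model structure on
Δ-generated spaces (weak equivalences the weak homotopy equivalences, fibrations the Serre
fibrations) and the Quillen model structure on `Top` (weak equivalences the weak homotopy
equivalences, fibrations the Serre fibrations).
-/

open CategoryTheory CategoryTheory.Limits Topology Topology.Homotopy

noncomputable section

/-- `f` is a retract of `g` in the arrow category. -/
def IsRetractOf {C : Type*} [Category C] {X Y Z W : C} (f : X ⟶ Y) (g : Z ⟶ W) : Prop :=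
  ∃ (i : X ⟶ Z) (r : Z ⟶ X) (i' : Y ⟶ W) (r' : W ⟶ Y),
    i ≫ r = 𝟙 X ∧ i' ≫ r' = 𝟙 Y ∧ i ≫ g = f ≫ i' ∧ g ≫ r' = r ≫ f

/-- A model structure on a category `C`: three classes of morphisms (weak equivalences,
cofibrations, fibrations) satisfying the usual model category axioms. -/
structure ModelStructure (C : Type*) [Category C] where
  W : MorphismProperty C
  Cof : MorphismProperty C
  Fib : MorphismProperty C
  W_id : ∀ X : C, W (𝟙 X)
  W_comp : ∀ {X Y Z : C} (f : X ⟶ Y) (g : Y ⟶ Z), W f → W g → W (f ≫ g)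
  W_of_comp_left : ∀ {X Y Z : C} (f : X ⟶ Y) (g : Y ⟶ Z), W f → W (f ≫ g) → W g
  W_of_comp_right : ∀ {X Y Z : C} (f : X ⟶ Y) (g : Y ⟶ Z), W g → W (f ≫ g) → W f
  W_retract : ∀ {X Y Z W' : C} (f : X ⟶ Y) (g : Z ⟶ W'), IsRetractOf f g → W g → W f
  Cof_retract : ∀ {X Y Z W' : C} (f : X ⟶ Y) (g : Z ⟶ W'), IsRetractOf f g → Cof g → Cof f
  Fib_retract : ∀ {X Y Z W' : C} (f : X ⟶ Y) (g : Z ⟶ W'), IsRetractOf f g → Fib g → Fib f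
  lift_cof_trivFib : ∀ {A B X Y : C} (i : A ⟶ B) (p : X ⟶ Y),
    Cof i → Fib p → W p → HasLiftingProperty i p
  lift_trivCof_fib : ∀ {A B X Y : C} (i : A ⟶ B) (p : X ⟶ Y),
    Cof i → W i → Fib p → HasLiftingProperty i p
  fact_cof_trivFib : ∀ {X Y : C} (f : X ⟶ Y),
    ∃ (Z : C) (i : X ⟶ Z) (p : Z ⟶ Y), Cof i ∧ Fib p ∧ W p ∧ i ≫ p = f
  fact_trivCof_fib : ∀ {X Y : C} (f : X ⟶ Y),
    ∃ (Z : C) (i : X ⟶ Z) (p : Z ⟶ Y), Cof i ∧ W i ∧ Fib p ∧ i ≫ p = f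

/-- The map on homotopy groups induced by a continuous map. -/
def HomotopyGroup.map (N : Type*) {X Y : Type*} [TopologicalSpace X] [TopologicalSpace Y]
    (f : C(X, Y)) (x : X) : HomotopyGroup N X x → HomotopyGroup N Y (f x) :=
  Quotient.map
    (fun p => (⟨f.comp p.1, fun y hy => by
      simp only [ContinuousMap.comp_apply, p.2 y hy]⟩ : GenLoop N Y (f x)))
    (fun p q h => h.map (fun H => H.compContinuousMap f))

/-- A continuous map is a weak homotopy equivalence if it induces a bijection on path
components and isomorphisms on all homotopy groups at all basepoints. -/
def ContinuousMap.IsWeakHomotopyEquiv {X Y : Type*} [TopologicalSpace X] [TopologicalSpace Y]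
    (f : C(X, Y)) : Prop :=
  (∀ y : Y, ∃ x : X, Joined (f x) y) ∧
  (∀ x₀ x₁ : X, Joined (f x₀) (f x₁) → Joined x₀ x₁) ∧
  (∀ (n : ℕ) (x : X), Function.Bijective (HomotopyGroup.map (Fin (n + 1)) f x))

/-- The category of Δ-generated (equivalently, arc-generated) topological spaces, as a full
subcategory of `TopCat`. -/
def DeltaGeneratedCat : Type 1 :=
  CategoryTheory.ObjectProperty.FullSubcategory fun X : TopCat.{0} => DeltaGeneratedSpace X

namespace DeltaGenerated

instance : Category DeltaGeneratedCat := ObjectProperty.FullSubcategory.category _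

/-- The full inclusion of Δ-generated spaces into topological spaces. -/
def dgToTop : DeltaGeneratedCat ⥤ TopCat := ObjectProperty.ι _

/-- The coreflector: replace the topology of a space by the Δ-generated topology (the final
topology for all continuous maps from the euclidean spaces, equivalently from the standard
simplices, equivalently from `ℝ`). -/
def topToDg : TopCat.{0} ⥤ DeltaGeneratedCat where
  obj X := ⟨TopCat.of (DeltaGeneratedSpace.of (Y := X)),
    show DeltaGeneratedSpace (DeltaGeneratedSpace.of (Y := X)) from inferInstance⟩
  map {X Y} f := by
    exact ObjectProperty.homMk (TopCat.ofHom (⟨fun x => WithGeneratedByTopology.equiv.symm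
        (f (WithGeneratedByTopology.equiv x)),
      (IsGeneratedBy.equiv_symm_comp_continuous_iff (fun n ↦ Fin n → ℝ)
        (Y := DeltaGeneratedSpace.of (Y := X)) (Z := Y) _).2
        (f.hom.continuous.comp WithGeneratedByTopology.continuous_equiv)⟩ :
      C(DeltaGeneratedSpace.of (Y := X), DeltaGeneratedSpace.of (Y := Y))))

instance : DeltaGeneratedSpace PUnit.{1} :=
  IsGeneratedBy.iff_le_generatedBy.2 (isOpen_implies_isOpen_iff.mp fun s _ => by
    rcases s.eq_empty_or_nonempty with h | h
    · rw [h]; exact isOpen_empty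
    · rw [h.eq_univ]; exact isOpen_univ)

/-- The one-point Δ-generated space. -/
def pt : DeltaGeneratedCat :=
  ⟨TopCat.of PUnit.{1}, show DeltaGeneratedSpace PUnit from inferInstance⟩

instance (X : DeltaGeneratedCat) : Nonempty (X ⟶ pt) :=
  ⟨by exact ObjectProperty.homMk (TopCat.ofHom (⟨fun _ => PUnit.unit, continuous_const⟩ : C(X.obj, PUnit)))⟩

instance (X : DeltaGeneratedCat) : Subsingleton (X ⟶ pt) :=
  ⟨fun f g => by apply ObjectProperty.hom_ext; ext x; rfl⟩

instance : HasTerminal DeltaGeneratedCat := hasTerminal_of_unique pt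

instance : DeltaGeneratedSpace Empty :=
  IsGeneratedBy.iff_le_generatedBy.2 (isOpen_implies_isOpen_iff.mp fun s _ => by
    rw [s.eq_empty_of_isEmpty]; exact isOpen_empty)

/-- The empty Δ-generated space. -/
def empt : DeltaGeneratedCat :=
  ⟨TopCat.of Empty, show DeltaGeneratedSpace Empty from inferInstance⟩

instance (X : DeltaGeneratedCat) : Nonempty (empt ⟶ X) :=
  ⟨by exact ObjectProperty.homMk (TopCat.ofHom (⟨fun e => e.elim, by continuity⟩ : C(Empty, X.obj)))⟩

instance (X : DeltaGeneratedCat) : Subsingleton (empt ⟶ X) :=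
  ⟨fun f g => by apply ObjectProperty.hom_ext; ext x; exact x.elim⟩

instance : HasInitial DeltaGeneratedCat := hasInitial_of_unique empt

end DeltaGenerated

/-- The geometric realization functor, taking values in Δ-generated spaces. (Since the
geometric realization of a simplicial set is Δ-generated, applying the coreflector to the
topological geometric realization does not change its topology.) -/
def sSetToDg : SSet.{0} ⥤ DeltaGeneratedCat := SSet.toTop ⋙ DeltaGenerated.topToDg

/-- A Quillen pair: the left adjoint preserves cofibrations and trivial cofibrations. -/
def IsQuillenPair {C D : Type*} [Category C] [Category D]
    (MC : ModelStructure C) (MD : ModelStructure D) (F : C ⥤ D) : Prop :=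
  (∀ {X Y : C} (f : X ⟶ Y), MC.Cof f → MD.Cof (F.map f)) ∧
  (∀ {X Y : C} (f : X ⟶ Y), MC.Cof f → MC.W f → MD.Cof (F.map f) ∧ MD.W (F.map f))

/-- A Quillen pair is a Quillen equivalence if for every cofibrant `X` and fibrant `Y`, a map
`F X ⟶ Y` is a weak equivalence iff its adjunct `X ⟶ G Y` is. -/
def IsQuillenEquivalence {C D : Type*} [Category C] [Category D]
    [HasInitial C] [HasTerminal D]
    (MC : ModelStructure C) (MD : ModelStructure D)
    {F : C ⥤ D} {G : D ⥤ C} (adj : F ⊣ G) : Prop :=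
  ∀ (X : C) (Y : D), MC.Cof (initial.to X) → MD.Fib (terminal.from Y) →
    ∀ f : F.obj X ⟶ Y, MD.W f ↔ MC.W (adj.homEquiv X Y f)


/-!
The coreflector `α` keeps the underlying set and does not change the maps out of a Δ-generated
space. Cubes, their products with the interval and geometric realizations of simplicial sets are
Δ-generated, so the counit `I (α Y) ⟶ Y` is a weak homotopy equivalence and `α` sends Serre
fibrations to Serre fibrations; by adjunction `I` then preserves cofibrations. Finally a map
`I X ⟶ Y` is the composite of `I` applied to its adjunct with the counit, so by two-out-of-three
it is a weak equivalence exactly when its adjunct is.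
-/

open unitInterval

section DeltaGeneratedSpaces

variable {ι : Type*} [Fintype ι]

instance deltaGeneratedSpace_pi_real : DeltaGeneratedSpace (ι → ℝ) :=
  (Homeomorph.piCongrLeft (Y := fun _ : ι => ℝ)
    (Fintype.equivFin ι).symm).isQuotientMap.isGeneratedBy

instance deltaGeneratedSpace_cube : DeltaGeneratedSpace (ι → I) :=
  (IsQuotientMap.of_inverse (f := fun (w : ι → I) i => (w i : ℝ)) (by fun_prop)
    (by fun_prop : Continuous fun (v : ι → ℝ) i => Set.projIcc 0 1 zero_le_one (v i))
    fun w => funext fun i => Set.projIcc_val zero_le_one (w i)).isGeneratedBy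

instance deltaGeneratedSpace_unitInterval : DeltaGeneratedSpace I :=
  (Homeomorph.funUnique (Fin 1) I).isQuotientMap.isGeneratedBy

instance deltaGeneratedSpace_prod_cube (n : ℕ) : DeltaGeneratedSpace (I × (Fin n → I)) :=
  (IsQuotientMap.of_inverse
    (f := fun p : I × (Fin n → I) => (Fin.cons p.1 p.2 : Fin (n + 1) → I)) (by fun_prop)
    (by fun_prop : Continuous fun v : Fin (n + 1) → I => (v 0, Fin.tail v))
    fun p => by simp).isGeneratedBy

/-- Rescale the positive part of `x` into the region `∑ xᵢ ≤ 1` and spread the missing mass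
evenly over the vertices. -/
def stdSimplexRetraction (x : ι → ℝ) : ι → ℝ :=
  let s := ∑ j, max (x j) 0
  fun i => max (x i) 0 / max 1 s + (1 - s / max 1 s) / Fintype.card ι

theorem continuous_stdSimplexRetraction : Continuous (stdSimplexRetraction (ι := ι)) := by
  unfold stdSimplexRetraction
  refine continuous_pi fun i => ?_
  have hpos : ∀ x : ι → ℝ, max 1 (∑ j, max (x j) 0) ≠ 0 := fun x =>
    (lt_of_lt_of_le one_pos (le_max_left _ _)).ne'
  fun_prop (disch := exact hpos _)

theorem stdSimplexRetraction_mem [Nonempty ι] (x : ι → ℝ) :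
    stdSimplexRetraction x ∈ stdSimplex ℝ ι := by
  set s := ∑ j, max (x j) 0
  have ht : 0 < max 1 s := lt_of_lt_of_le one_pos (le_max_left _ _)
  have hst : s / max 1 s ≤ 1 := (div_le_one ht).2 (le_max_right _ _)
  have hn : (Fintype.card ι : ℝ) ≠ 0 := Nat.cast_ne_zero.2 Fintype.card_ne_zero
  refine ⟨fun i => ?_, ?_⟩ <;> simp only [stdSimplexRetraction]
  · exact add_nonneg (div_nonneg (le_max_right _ _) ht.le)
      (div_nonneg (sub_nonneg.2 hst) (Nat.cast_nonneg _))
  · rw [Finset.sum_add_distrib, ← Finset.sum_div, Finset.sum_const, Finset.card_univ,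
      nsmul_eq_mul]
    field_simp
    ring

theorem stdSimplexRetraction_of_mem {x : ι → ℝ} (hx : x ∈ stdSimplex ℝ ι) :
    stdSimplexRetraction x = x := by
  obtain ⟨hnonneg, hsum⟩ := hx
  have hmax : ∀ i, max (x i) 0 = x i := fun i => max_eq_left (hnonneg i)
  funext i
  simp [stdSimplexRetraction, hmax, hsum]

instance deltaGeneratedSpace_stdSimplex [Nonempty ι] : DeltaGeneratedSpace (stdSimplex ℝ ι) :=
  (IsQuotientMap.of_inverse (f := Subtype.val) continuous_subtype_val
    (continuous_stdSimplexRetraction.subtype_mk stdSimplexRetraction_mem)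
    fun x => Subtype.ext (stdSimplexRetraction_of_mem x.2)).isGeneratedBy

instance deltaGeneratedSpace_simplexCategory_toTop_obj (n : SimplexCategory) :
    DeltaGeneratedSpace (SimplexCategory.toTop.{0}.obj n) :=
  (Homeomorph.ulift.symm : stdSimplex ℝ (Fin (n.len + 1)) ≃ₜ _).isQuotientMap.isGeneratedBy

theorem Topology.IsGeneratedBy.of_isColimit {κ : Type*} {X : κ → Type*}
    [∀ k, TopologicalSpace (X k)] {J : Type} [SmallCategory J] {F : J ⥤ TopCat.{0}}
    (hF : ∀ j, IsGeneratedBy X (F.obj j)) {c : Cocone F} (hc : IsColimit c) :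
    IsGeneratedBy X c.pt := by
  have : @IsGeneratedBy _ X _ c.pt (⨆ j, (F.obj j).str.coinduced (c.ι.app j)) :=
    IsGeneratedBy.iSup fun j => haveI := hF j; IsGeneratedBy.coinduced _
  rwa [← TopCat.coinduced_of_isColimit c hc] at this

instance deltaGeneratedSpace_toTop_obj (A : SSet.{0}) : DeltaGeneratedSpace (SSet.toTop.obj A) :=
  haveI := sSetTopAdj.leftAdjoint_preservesColimits
  IsGeneratedBy.of_isColimit
    (fun j => (TopCat.homeoOfIso (SSet.toTopSimplex.app j.left).symm).isQuotientMap.isGeneratedBy)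
    (isColimitOfPreserves SSet.toTop (Presheaf.isColimitTautologicalCocone'.{0} A))

end DeltaGeneratedSpaces

def ContinuousMap.toDeltaGenerated {Y Z : Type*} [TopologicalSpace Y] [TopologicalSpace Z]
    [DeltaGeneratedSpace Z] (g : C(Z, Y)) : C(Z, DeltaGeneratedSpace.of (Y := Y)) :=
  ⟨WithGeneratedByTopology.equiv.symm ∘ g,
    (IsGeneratedBy.equiv_symm_comp_continuous_iff _ g).2 g.continuous⟩

namespace DeltaGeneratedSpace

variable {Y : Type*} [TopologicalSpace Y]

theorem isWeakHomotopyEquiv_equiv :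
    (⟨WithGeneratedByTopology.equiv, WithGeneratedByTopology.continuous_equiv⟩ :
      C(of (Y := Y), Y)).IsWeakHomotopyEquiv := by
  refine ⟨fun y => ⟨y, Joined.refl y⟩, fun x₀ x₁ ⟨γ⟩ =>
    ⟨⟨γ.toContinuousMap.toDeltaGenerated, γ.source, γ.target⟩⟩, fun n x => ⟨?_, ?_⟩⟩
  · intro a b
    induction a, b using Quotient.inductionOn₂ with | _ p q => ?_
    intro h
    obtain ⟨H⟩ := Quotient.exact h
    exact Quotient.sound
      ⟨⟨⟨H.toContinuousMap.toDeltaGenerated, H.map_zero_left, H.map_one_left⟩, H.prop'⟩⟩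
  · rintro ⟨p⟩
    exact ⟨⟦⟨p.1.toDeltaGenerated, p.2⟩⟧, rfl⟩

end DeltaGeneratedSpace

namespace ModelStructure

variable {C : Type*} [Category C] (M : ModelStructure C)

theorem W_of_isIso {X Y : C} (e : X ⟶ Y) [IsIso e] : M.W e :=
  M.W_retract e (𝟙 X) ⟨𝟙 X, 𝟙 X, inv e, e, by simp, by simp, by simp, by simp⟩ (M.W_id X)

theorem W_iff_of_fac_left {X Y Z : C} {f : X ⟶ Y} {g : Y ⟶ Z} {h : X ⟶ Z} (hf : M.W f)
    (fac : f ≫ g = h) : M.W h ↔ M.W g := by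
  subst fac
  exact ⟨M.W_of_comp_left f g hf, M.W_comp f g hf⟩

theorem W_iff_of_fac_right {X Y Z : C} {f : X ⟶ Y} {g : Y ⟶ Z} {h : X ⟶ Z} (hg : M.W g)
    (fac : f ≫ g = h) : M.W h ↔ M.W f := by
  subst fac
  exact ⟨M.W_of_comp_right f g hg, fun hf => M.W_comp f g hf hg⟩

theorem cof_of_hasLiftingProperty {A B : C} (f : A ⟶ B)
    (h : ∀ ⦃X Y : C⦄ (p : X ⟶ Y), M.Fib p → M.W p → HasLiftingProperty f p) : M.Cof f := by
  obtain ⟨Z, i, p, hi, hp, hw, hip⟩ := M.fact_cof_trivFib f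
  have := h p hp hw
  have sq : CommSq i f p (𝟙 B) := ⟨hip.trans (Category.comp_id f).symm⟩
  exact M.Cof_retract f i ⟨𝟙 A, 𝟙 A, sq.lift, p, Category.id_comp _, sq.fac_right,
    (Category.id_comp i).trans sq.fac_left.symm, hip.trans (Category.id_comp f).symm⟩ hi

theorem cof_map_of_adjunction {D : Type*} [Category D] (M' : ModelStructure D) {F : C ⥤ D}
    {G : D ⥤ C} (adj : F ⊣ G)
    (hG : ∀ ⦃X Y : D⦄ (p : X ⟶ Y), M'.Fib p → M'.W p → M.Fib (G.map p) ∧ M.W (G.map p))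
    {A B : C} {f : A ⟶ B} (hf : M.Cof f) : M'.Cof (F.map f) :=
  M'.cof_of_hasLiftingProperty _ fun _ _ p hp hw =>
    (adj.hasLiftingProperty_iff f p).2 (M.lift_cof_trivFib f _ hf (hG p hp hw).1 (hG p hp hw).2)

end ModelStructure

theorem CategoryTheory.Adjunction.hasLiftingProperty_map_map_iff {C D : Type*} [Category C]
    [Category D] {F : C ⥤ D} {G : D ⥤ C} (adj : F ⊣ G) {A B X Y : D} (i : A ⟶ B) (p : X ⟶ Y)
    [IsIso (adj.counit.app A)] [IsIso (adj.counit.app B)] :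
    HasLiftingProperty (F.map (G.map i)) p ↔ HasLiftingProperty i p :=
  HasLiftingProperty.iff_of_arrow_iso_left
    (Arrow.isoMk (asIso (adj.counit.app A)) (asIso (adj.counit.app B))
      (adj.counit.naturality i).symm) p

namespace DeltaGenerated

def coreflection : dgToTop ⊣ topToDg := GeneratedByTopCat.adj

instance (Y : TopCat.{0}) [DeltaGeneratedSpace Y] : IsIso (coreflection.counit.app Y) :=
  (TopCat.isoOfHomeo (X := dgToTop.obj (topToDg.obj Y)) (Y := Y)
    (IsGeneratedBy.homeomorph (X := fun n ↦ Fin n → ℝ) (Y := (Y : Type)))).isIso_hom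

variable {MD : ModelStructure DeltaGeneratedCat} {MT : ModelStructure TopCat.{0}}

theorem W_iff_W_dgToTop_map
    (hDW : ∀ {X Y : DeltaGeneratedCat} (f : X ⟶ Y),
      MD.W f ↔ ContinuousMap.IsWeakHomotopyEquiv (f.hom.hom : C(X.obj, Y.obj)))
    (hTW : ∀ {X Y : TopCat.{0}} (f : X ⟶ Y),
      MT.W f ↔ ContinuousMap.IsWeakHomotopyEquiv (f.hom : C(X, Y)))
    {X Y : DeltaGeneratedCat} (f : X ⟶ Y) : MD.W f ↔ MT.W (dgToTop.map f) :=
  (hDW f).trans (hTW _).symm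

theorem W_counit_app
    (hTW : ∀ {X Y : TopCat.{0}} (f : X ⟶ Y),
      MT.W f ↔ ContinuousMap.IsWeakHomotopyEquiv (f.hom : C(X, Y)))
    (adj : dgToTop ⊣ topToDg) (Y : TopCat.{0}) : MT.W (adj.counit.app Y) := by
  rw [← adj.rightAdjointUniq_hom_app_counit coreflection Y]
  exact MT.W_comp _ _ (MT.W_of_isIso _)
    ((hTW _).2 DeltaGeneratedSpace.isWeakHomotopyEquiv_equiv)

theorem W_topToDg_map_iff
    (hDW : ∀ {X Y : DeltaGeneratedCat} (f : X ⟶ Y),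
      MD.W f ↔ ContinuousMap.IsWeakHomotopyEquiv (f.hom.hom : C(X.obj, Y.obj)))
    (hTW : ∀ {X Y : TopCat.{0}} (f : X ⟶ Y),
      MT.W f ↔ ContinuousMap.IsWeakHomotopyEquiv (f.hom : C(X, Y)))
    {E B : TopCat.{0}} (q : E ⟶ B) : MD.W (topToDg.map q) ↔ MT.W q :=
  (W_iff_W_dgToTop_map hDW hTW _).trans
    ((MT.W_iff_of_fac_right (W_counit_app hTW coreflection B)
      (coreflection.counit.naturality q)).symm.trans
    (MT.W_iff_of_fac_left (W_counit_app hTW coreflection E) rfl))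

theorem fib_topToDg_map
    (hDFib : ∀ {X Y : DeltaGeneratedCat} (f : X ⟶ Y),
      MD.Fib f ↔ ∀ (p : ℕ) (k : Fin (p + 2)),
        HasLiftingProperty (sSetToDg.map ((SSet.horn (p + 1) k).ι)) f)
    (hTFib : ∀ {X Y : TopCat.{0}} (f : X ⟶ Y),
      MT.Fib f ↔ ∀ (p : ℕ) (k : Fin (p + 2)),
        HasLiftingProperty (SSet.toTop.map ((SSet.horn (p + 1) k).ι)) f)
    {E B : TopCat.{0}} {q : E ⟶ B} (hq : MT.Fib q) : MD.Fib (topToDg.map q) := by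
  refine (hDFib _).2 fun p k => (coreflection.hasLiftingProperty_iff _ _).1 ?_
  exact (coreflection.hasLiftingProperty_map_map_iff _ _).2 ((hTFib q).1 hq p k)

end DeltaGenerated

theorem deltaGenerated_top_quillen_equivalence
    (MD : ModelStructure DeltaGeneratedCat) (MT : ModelStructure TopCat.{0})
    -- `MD` is the model structure on Δ-generated spaces whose weak equivalences are the weak
    -- homotopy equivalences and whose fibrations are the Serre fibrations
    (hDW : ∀ {X Y : DeltaGeneratedCat} (f : X ⟶ Y),
      MD.W f ↔ ContinuousMap.IsWeakHomotopyEquiv (f.hom.hom : C(X.obj, Y.obj)))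
    (hDFib : ∀ {X Y : DeltaGeneratedCat} (f : X ⟶ Y),
      MD.Fib f ↔ ∀ (p : ℕ) (k : Fin (p + 2)),
        HasLiftingProperty (sSetToDg.map ((SSet.horn (p + 1) k).ι)) f)
    -- `MT` is the Quillen model structure on `Top`: weak equivalences are the weak homotopy
    -- equivalences, fibrations are the Serre fibrations
    (hTW : ∀ {X Y : TopCat.{0}} (f : X ⟶ Y),
      MT.W f ↔ ContinuousMap.IsWeakHomotopyEquiv (f.hom : C(X, Y)))
    (hTFib : ∀ {X Y : TopCat.{0}} (f : X ⟶ Y),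
      MT.Fib f ↔ ∀ (p : ℕ) (k : Fin (p + 2)),
        HasLiftingProperty (SSet.toTop.map ((SSet.horn (p + 1) k).ι)) f) :
    -- the inclusion/coreflector adjunction exists, is a Quillen pair, and is a
    -- Quillen equivalence
    IsQuillenPair MD MT DeltaGenerated.dgToTop ∧
    Nonempty (DeltaGenerated.dgToTop ⊣ DeltaGenerated.topToDg) ∧
    ∀ adj : DeltaGenerated.dgToTop ⊣ DeltaGenerated.topToDg,
      IsQuillenEquivalence MD MT adj := by
  have cof_map : ∀ {X Y : DeltaGeneratedCat} (f : X ⟶ Y), MD.Cof f →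
      MT.Cof (DeltaGenerated.dgToTop.map f) := fun _ hf =>
    MD.cof_map_of_adjunction MT DeltaGenerated.coreflection (fun _ _ _ hp hw =>
      ⟨DeltaGenerated.fib_topToDg_map hDFib hTFib hp,
        (DeltaGenerated.W_topToDg_map_iff hDW hTW _).2 hw⟩) hf
  refine ⟨⟨cof_map, fun f hf hw =>
      ⟨cof_map f hf, (DeltaGenerated.W_iff_W_dgToTop_map hDW hTW f).1 hw⟩⟩,
    ⟨DeltaGenerated.coreflection⟩, fun adj X Y _ _ f => ?_⟩
  have fac : DeltaGenerated.dgToTop.map (adj.homEquiv X Y f) ≫ adj.counit.app Y = f :=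
    (adj.homEquiv_counit X Y _).symm.trans (Equiv.symm_apply_apply _ _)
  exact (MT.W_iff_of_fac_right (DeltaGenerated.W_counit_app hTW adj Y) fac).trans
    (DeltaGenerated.W_iff_W_dgToTop_map hDW hTW _).symm
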